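/- The maximum of V over (0,∞) equals 8/27. Setting μ̃₀ = √(μ₀² + 8/27) and h₀ = φ₀'/φ₀, the following bounds hold: (1) −μ̃₀ ≤ h₀(x) for all x ≥ 0; (2) h₀(x) ≤ −μ₀ for all x ≥ x₀, where x₀ is the unique zero of V in (0,∞); and (3) lim_{x→+∞} h₀(x) = −μ₀. -/

import Mathlib

open Real MeasureTheory Filter

noncomputable def Qs (x : ℝ) : ℝ := (3/2) * (1 / Real.cosh (x/2))^2
noncomputable def Hs (x : ℝ) : ℝ := Real.tanh (x/2)
noncomputable def alphaFn (x : ℝ) : ℝ := (1/3) * (Real.sinh x + x)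
noncomputable def alphaInv : ℝ → ℝ := Function.invFun alphaFn
noncomputable def Qt (x : ℝ) : ℝ := Qs (alphaInv x)
noncomputable def Ht (x : ℝ) : ℝ := Hs (alphaInv x)
noncomputable def Vpot (x : ℝ) : ℝ := 2 * (Qt x)^2 * (1 - Qt x)

open Topology

/-!
`h₀ = φ₀'/φ₀` solves the Riccati equation `h' = W - h²` with `W = V + μ₀²`, and it is defined on
all of `ℝ`. Since `V ≤ 8/27`, a solution that drops below `-√(μ₀² + 8/27)` is pushed further down
and `1/h` then increases at a uniform rate while staying negative, i.e. `h` blows up in finite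
time. On `[x₀, ∞)` we have `V ≥ 0`, so there `h` can cross the level `-μ₀` only upwards; if it
were above `-μ₀` it would be driven up to `0` and stay nonnegative, making `φ₀` nondecreasing,
against its decay. Finally `V → 0`, so every level below `-μ₀` is eventually crossed only upwards,
and a solution staying below such a level would decrease at a uniform rate, against the lower
bound.
-/

theorem tendsto_atTop_of_le_deriv {f f' : ℝ → ℝ} {a δ : ℝ} (hδ : 0 < δ)
    (hf : ∀ x ≥ a, HasDerivAt f (f' x) x) (hf' : ∀ x ≥ a, δ ≤ f' x) :
    Tendsto f atTop atTop := by
  have hgrowth : ∀ x ≥ a, δ * (x - a) ≤ f x - f a := by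
    intro x hx
    refine (convex_Ici a).mul_sub_le_image_sub_of_le_deriv
      (fun y hy => (hf y hy).continuousAt.continuousWithinAt) ?_ ?_ a (Set.mem_Ici.2 le_rfl)
      x hx hx
    · intro y hy
      rw [interior_Ici] at hy
      exact (hf y hy.le).differentiableAt.differentiableWithinAt
    · intro y hy
      rw [interior_Ici] at hy
      rw [(hf y hy.le).deriv]
      exact hf' y hy.le
  have hlin : Tendsto (fun x => f a + δ * (x - a)) atTop atTop :=
    tendsto_atTop_add_const_left _ _
      ((tendsto_atTop_add_const_right _ _ tendsto_id).const_mul_atTop hδ)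
  exact tendsto_atTop_mono' atTop
    (eventually_atTop.2 ⟨a, fun x hx => by linarith [hgrowth x hx]⟩) hlin

theorem hasDerivAt_logDeriv_of_deriv_deriv_eq {f : ℝ → ℝ} {x w : ℝ} (hf : ContDiff ℝ 2 f)
    (hx : f x ≠ 0) (hw : deriv (deriv f) x = w * f x) :
    HasDerivAt (logDeriv f) (w - logDeriv f x ^ 2) x := by
  have hf' : ContDiff ℝ 1 (deriv f) := (contDiff_succ_iff_deriv.1 hf).2.2
  refine (((hf'.differentiable one_ne_zero) x).hasDerivAt.div
    ((hf.differentiable two_ne_zero) x).hasDerivAt hx).congr_deriv ?_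
  rw [logDeriv_apply, hw]
  field_simp

theorem tendsto_zero_of_abs_le_mul_exp {f : ℝ → ℝ} {C k : ℝ} (hk : k < 0)
    (hf : ∀ x, |f x| ≤ C * exp (k * |x|)) : Tendsto f atTop (𝓝 0) := by
  have hbound : Tendsto (fun x => C * exp (k * |x|)) atTop (𝓝 0) := by
    simpa using (tendsto_exp_atBot.comp
      (tendsto_abs_atTop_atTop.const_mul_atTop_of_neg hk)).const_mul C
  exact squeeze_zero_norm hf hbound

theorem not_tendsto_zero_of_eventually_logDeriv_nonneg {f : ℝ → ℝ} (hf : Differentiable ℝ f)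
    (hpos : ∀ x, 0 < f x) (h : ∀ᶠ x in atTop, 0 ≤ logDeriv f x) : ¬Tendsto f atTop (𝓝 0) := by
  intro hlim
  obtain ⟨b, hb⟩ := eventually_atTop.1 h
  have hmono : MonotoneOn f (Set.Ici b) := by
    refine monotoneOn_of_deriv_nonneg (convex_Ici b) hf.continuous.continuousOn
      hf.differentiableOn fun x hx => ?_
    rw [interior_Ici] at hx
    have := mul_nonneg (hb x hx.le) (hpos x).le
    rwa [logDeriv_apply, div_mul_cancel₀ _ (hpos x).ne'] at this
  have : f b ≤ 0 := ge_of_tendsto hlim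
    (eventually_atTop.2 ⟨b, fun x hx => hmono (Set.mem_Ici.2 le_rfl) hx hx⟩)
  linarith [hpos b]

section Riccati

variable {h W : ℝ → ℝ}

theorem riccati_le_neg_of_le_neg (hh : ∀ x, HasDerivAt h (W x - h x ^ 2) x) {a L : ℝ}
    (hW : ∀ x ≥ a, W x < L ^ 2) (ha : h a ≤ -L) : ∀ x ≥ a, h x ≤ -L := fun x hx =>
  image_le_of_deriv_right_lt_deriv_boundary (B := fun _ => -L) (B' := 0)
    (fun y _ => (hh y).continuousAt.continuousWithinAt) (fun y _ => (hh y).hasDerivWithinAt) ha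
    (fun _ => hasDerivAt_const _ _)
    (fun y hy hyL => by simpa [hyL] using hW y hy.1) ⟨hx, le_rfl⟩

theorem riccati_ge_of_ge (hh : ∀ x, HasDerivAt h (W x - h x ^ 2) x) {a c : ℝ}
    (hW : ∀ x ≥ a, c ^ 2 < W x) (ha : c ≤ h a) : ∀ x ≥ a, c ≤ h x := fun x hx =>
  image_le_of_deriv_right_lt_deriv_boundary (f := fun _ => c) (f' := 0)
    (fun _ _ => continuousWithinAt_const) (fun _ _ => hasDerivWithinAt_const _ _ _) ha hh
    (fun y hy hyc => by simpa [← hyc] using hW y hy.1) ⟨hx, le_rfl⟩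

theorem neg_le_of_riccati (hh : ∀ x, HasDerivAt h (W x - h x ^ 2) x) {a M : ℝ} (hM : 0 ≤ M)
    (hW : ∀ x ≥ a, W x ≤ M ^ 2) : -M ≤ h a := by
  by_contra! ha
  set L := -h a
  have hML : M ^ 2 < L ^ 2 := by nlinarith
  have hle : ∀ x ≥ a, h x ≤ -L :=
    riccati_le_neg_of_le_neg hh (fun x hx => (hW x hx).trans_lt hML) (by simp [L])
  have hsq : ∀ x ≥ a, L ^ 2 ≤ h x ^ 2 := fun x hx => by nlinarith [hle x hx]
  have hL : 0 < L ^ 2 := by nlinarith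
  -- `(1/h)' = 1 - W/h² ≥ 1 - M²/L² > 0`, while `1/h < 0`.
  have hinv : ∀ x ≥ a, HasDerivAt (fun y => (h y)⁻¹) (-(W x - h x ^ 2) / h x ^ 2) x :=
    fun x hx => (hh x).inv (by nlinarith [hsq x hx])
  have hrate : ∀ x ≥ a, 1 - M ^ 2 / L ^ 2 ≤ -(W x - h x ^ 2) / h x ^ 2 := fun x hx => by
    have hx2 : 0 < h x ^ 2 := hL.trans_le (hsq x hx)
    have hWh : W x / h x ^ 2 ≤ M ^ 2 / L ^ 2 :=
      calc W x / h x ^ 2 ≤ M ^ 2 / h x ^ 2 := by gcongr; exact hW x hx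
        _ ≤ M ^ 2 / L ^ 2 := div_le_div_of_nonneg_left (sq_nonneg M) hL (hsq x hx)
    rw [neg_sub, sub_div, div_self hx2.ne']
    linarith
  have hδ : 0 < 1 - M ^ 2 / L ^ 2 := by rw [sub_pos, div_lt_one hL]; exact hML
  obtain ⟨x, hx0, hxa⟩ := ((tendsto_atTop_of_le_deriv hδ hinv hrate).eventually_gt_atTop 0
    |>.and (eventually_ge_atTop a)).exists
  have : h x < 0 := by nlinarith [hle x hxa]
  linarith [inv_lt_zero.2 this]

theorem riccati_eventually_nonneg (hh : ∀ x, HasDerivAt h (W x - h x ^ 2) x) {b μ : ℝ}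
    (hμ : 0 < μ) (hW : ∀ x ≥ b, μ ^ 2 ≤ W x) (hb : -μ < h b) : ∀ᶠ x in atTop, 0 ≤ h x := by
  obtain ⟨b', hbb', hb'⟩ : ∃ b' ≥ b, 0 ≤ h b' := by
    by_contra! hneg
    set c := min (h b) 0
    have hc : c ^ 2 < μ ^ 2 := by
      have : -μ < c := lt_min hb (by linarith)
      nlinarith [min_le_right (h b) 0]
    have hge : ∀ x ≥ b, c ≤ h x :=
      riccati_ge_of_ge hh (fun x hx => hc.trans_le (hW x hx)) (min_le_left _ _)
    have hrate : ∀ x ≥ b, μ ^ 2 - c ^ 2 ≤ W x - h x ^ 2 := fun x hx => by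
      nlinarith [hge x hx, hneg x hx, hW x hx]
    obtain ⟨x, hx0, hxb⟩ := ((tendsto_atTop_of_le_deriv (sub_pos.2 hc) (fun x _ => hh x) hrate)
      |>.eventually_ge_atTop 0 |>.and (eventually_ge_atTop b)).exists
    exact (hneg x hxb).not_ge hx0
  exact eventually_atTop.2 ⟨b', riccati_ge_of_ge hh
    (fun x hx => by nlinarith [hW x (hbb'.trans hx)]) hb'⟩

theorem riccati_eventually_neg_lt (hh : ∀ x, HasDerivAt h (W x - h x ^ 2) x) {N L B : ℝ}
    (hL : 0 ≤ L) (hNL : N ^ 2 < L ^ 2) (hW : ∀ᶠ x in atTop, W x ≤ N ^ 2) (hB : ∀ x, B ≤ h x) :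
    ∀ᶠ x in atTop, -L < h x := by
  obtain ⟨a, ha⟩ := eventually_atTop.1 hW
  refine eventually_atTop.2 ⟨a, fun x hx => ?_⟩
  by_contra! hxL
  have hle : ∀ y ≥ x, h y ≤ -L :=
    riccati_le_neg_of_le_neg hh (fun y hy => (ha y (hx.trans hy)).trans_lt hNL) hxL
  have hrate : ∀ y ≥ x, L ^ 2 - N ^ 2 ≤ -(W y - h y ^ 2) := fun y hy => by
    nlinarith [hle y hy, ha y (hx.trans hy)]
  obtain ⟨y, hy⟩ := (tendsto_atTop_of_le_deriv (sub_pos.2 hNL) (fun y _ => (hh y).neg) hrate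
    |>.eventually_gt_atTop (-B)).exists
  linarith [hB y, show (-h) y = -h y from rfl]

theorem tendsto_neg_of_riccati (hh : ∀ x, HasDerivAt h (W x - h x ^ 2) x) {μ B : ℝ} (hμ : 0 ≤ μ)
    (hW : Tendsto W atTop (𝓝 (μ ^ 2))) (hB : ∀ x, B ≤ h x) (hle : ∀ᶠ x in atTop, h x ≤ -μ) :
    Tendsto h atTop (𝓝 (-μ)) := by
  refine tendsto_order.2 ⟨fun a ha => ?_, fun a ha => hle.mono fun x hx => hx.trans_lt ha⟩
  have hN : μ ^ 2 < ((μ - a) / 2) ^ 2 := by nlinarith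
  simpa using riccati_eventually_neg_lt hh (L := -a) (by linarith) (by nlinarith)
    (hW.eventually (eventually_le_nhds hN)) hB

theorem logDeriv_le_neg_of_riccati {φ : ℝ → ℝ} (hφ : Differentiable ℝ φ)
    (hpos : ∀ x, 0 < φ x) (hlim : Tendsto φ atTop (𝓝 0))
    (hh : ∀ x, HasDerivAt (logDeriv φ) (W x - logDeriv φ x ^ 2) x) {b μ : ℝ} (hμ : 0 < μ)
    (hW : ∀ x ≥ b, μ ^ 2 ≤ W x) : ∀ x ≥ b, logDeriv φ x ≤ -μ := fun _ hx =>
  not_lt.1 fun hgt => not_tendsto_zero_of_eventually_logDeriv_nonneg hφ hpos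
    (riccati_eventually_nonneg hh hμ (fun y hy => hW y (hx.trans hy)) hgt) hlim

end Riccati

theorem alphaFn_strictMono : StrictMono alphaFn := fun x y hxy => by
  have := Real.sinh_strictMono hxy
  simp only [alphaFn]
  linarith

theorem alphaFn_zero : alphaFn 0 = 0 := by simp [alphaFn]

theorem alphaFn_surjective : Function.Surjective alphaFn := by
  have hcont : Continuous alphaFn := by unfold alphaFn; fun_prop
  refine hcont.surjective
    (tendsto_atTop_mono' _ ?_ (tendsto_id.atTop_div_const (by norm_num : (0:ℝ) < 3)))
    (tendsto_atBot_mono' _ ?_ (tendsto_id.atBot_div_const (by norm_num : (0:ℝ) < 3)))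
  · filter_upwards [eventually_ge_atTop 0] with x hx
    have := Real.sinh_nonneg_iff.2 hx
    simp only [alphaFn, id]
    linarith
  · filter_upwards [eventually_le_atBot 0] with x hx
    have := Real.sinh_nonpos_iff.2 hx
    simp only [alphaFn, id]
    linarith

theorem alphaInv_alphaFn (y : ℝ) : alphaInv (alphaFn y) = y :=
  Function.leftInverse_invFun alphaFn_strictMono.injective y

theorem alphaFn_alphaInv (x : ℝ) : alphaFn (alphaInv x) = x :=
  Function.rightInverse_invFun alphaFn_surjective x

theorem alphaInv_le_alphaInv {x y : ℝ} : alphaInv x ≤ alphaInv y ↔ x ≤ y := by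
  conv_rhs => rw [← alphaFn_alphaInv x, ← alphaFn_alphaInv y]
  exact alphaFn_strictMono.le_iff_le.symm

theorem alphaInv_nonneg {x : ℝ} (hx : 0 ≤ x) : 0 ≤ alphaInv x := by
  rwa [← alphaInv_alphaFn 0, alphaFn_zero, alphaInv_le_alphaInv]

theorem tendsto_alphaInv_atTop : Tendsto alphaInv atTop atTop :=
  tendsto_atTop_atTop_of_monotone (fun _ _ => alphaInv_le_alphaInv.2)
    fun y => ⟨alphaFn y, (alphaInv_alphaFn y).ge⟩

theorem Qs_pos (y : ℝ) : 0 < Qs y := by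
  have := Real.cosh_pos (y / 2)
  unfold Qs
  positivity

theorem Qs_le_Qs {y z : ℝ} (h : |y| ≤ |z|) : Qs z ≤ Qs y := by
  have hcosh : cosh (y / 2) ≤ cosh (z / 2) := by
    rw [Real.cosh_le_cosh, abs_div, abs_div]
    gcongr
  unfold Qs
  gcongr

theorem tendsto_Qs_atTop : Tendsto Qs atTop (𝓝 0) := by
  have hcosh : Tendsto (fun y => cosh (y / 2)) atTop atTop :=
    tendsto_atTop_mono' _ (eventually_ge_atTop 0 |>.mono fun y hy =>
      (Real.self_le_sinh_iff.2 (by linarith)).trans (sinh_lt_cosh _).le)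
      (tendsto_id.atTop_div_const two_pos)
  convert (hcosh.inv_tendsto_atTop.pow 2).const_mul (3 / 2 : ℝ) using 1
  · ext y
    simp [Qs]
  · simp

theorem Qt_pos (x : ℝ) : 0 < Qt x := Qs_pos _

theorem Vpot_le (x : ℝ) : Vpot x ≤ 8 / 27 := by
  have hq := Qt_pos x
  unfold Vpot
  -- `8/27 - 2q²(1 - q) = 2(q - 2/3)²(q + 1/3)`
  nlinarith [mul_nonneg (sq_nonneg (Qt x - 2 / 3)) (by linarith : (0:ℝ) ≤ Qt x + 1 / 3)]

theorem isGreatest_Vpot : IsGreatest (Vpot '' Set.Ioi 0) (8 / 27) := by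
  refine ⟨?_, Set.forall_mem_image.2 fun x _ => Vpot_le x⟩
  set y := 2 * arcosh (3 / 2)
  have hy : 0 < y := by have := arcosh_pos (by norm_num : (1:ℝ) < 3 / 2); positivity
  have hQ : Qt (alphaFn y) = 2 / 3 := by
    rw [Qt, alphaInv_alphaFn, Qs, mul_div_cancel_left₀ _ two_ne_zero, cosh_arcosh (by norm_num)]
    norm_num
  refine ⟨alphaFn y, ?_, by rw [Vpot, hQ]; norm_num⟩
  rw [Set.mem_Ioi, ← alphaFn_zero]
  exact alphaFn_strictMono hy

theorem Vpot_nonneg_of_le {x₀ x : ℝ} (hx₀ : 0 ≤ x₀) (hV : Vpot x₀ = 0) (hx : x₀ ≤ x) :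
    0 ≤ Vpot x := by
  have hQ₀ : Qt x₀ = 1 := by
    have := Qt_pos x₀
    unfold Vpot at hV
    rcases mul_eq_zero.1 hV with h | h
    · simp_all
    · linarith
  have hQ : Qt x ≤ 1 := hQ₀ ▸ Qs_le_Qs (by
    rw [abs_of_nonneg (alphaInv_nonneg hx₀), abs_of_nonneg (alphaInv_nonneg (hx₀.trans hx))]
    exact alphaInv_le_alphaInv.2 hx)
  unfold Vpot
  have := Qt_pos x
  nlinarith

theorem tendsto_Vpot_atTop : Tendsto Vpot atTop (𝓝 0) := by
  have hQ : Tendsto Qt atTop (𝓝 0) := tendsto_Qs_atTop.comp tendsto_alphaInv_atTop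
  have := ((hQ.pow 2).const_mul 2).mul
    (tendsto_const_nhds.sub hQ : Tendsto (fun x => 1 - Qt x) atTop (𝓝 (1 - 0)))
  norm_num at this
  exact this

theorem h0_bounds_and_limit_general (φ₀ : ℝ → ℝ) (μ₀ : ℝ)
    (hC2 : ContDiff ℝ 2 φ₀) (hpos : ∀ x : ℝ, 0 < φ₀ x)
    (hμ1 : (0.808:ℝ) ≤ μ₀)
    (heq : ∀ x : ℝ, -(deriv (deriv φ₀) x) + Vpot x * φ₀ x = -μ₀^2 * φ₀ x)
    (hdecay : ∃ C > (0:ℝ), ∀ x : ℝ,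
      |φ₀ x| + |deriv φ₀ x| ≤ C * Real.exp (-(Real.sqrt 2 / 2) * μ₀ * |x|))
    (x0 : ℝ) (hx0pos : 0 < x0) (hx0 : Vpot x0 = 0) :
    IsGreatest (Vpot '' Set.Ioi (0:ℝ)) (8/27) ∧
    (∀ x : ℝ, 0 ≤ x → -Real.sqrt (μ₀^2 + 8/27) ≤ deriv φ₀ x / φ₀ x) ∧
    (∀ x : ℝ, x0 ≤ x → deriv φ₀ x / φ₀ x ≤ -μ₀) ∧
    Filter.Tendsto (fun x => deriv φ₀ x / φ₀ x) Filter.atTop (nhds (-μ₀)) := by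
  obtain ⟨C, -, hC⟩ := hdecay
  have hμ₀ : 0 < μ₀ := by norm_num at hμ1; linarith
  have hh : ∀ x, HasDerivAt (logDeriv φ₀) ((Vpot x + μ₀ ^ 2) - logDeriv φ₀ x ^ 2) x :=
    fun x => hasDerivAt_logDeriv_of_deriv_deriv_eq hC2 (hpos x).ne' (by linear_combination -heq x)
  have hlim : Tendsto φ₀ atTop (𝓝 0) :=
    tendsto_zero_of_abs_le_mul_exp (by simp only [neg_mul, neg_lt_zero]; positivity)
      fun x => (le_add_of_nonneg_right (abs_nonneg _)).trans (hC x)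
  have hlower : ∀ x, -√(μ₀ ^ 2 + 8 / 27) ≤ logDeriv φ₀ x := fun x =>
    neg_le_of_riccati hh (sqrt_nonneg _) fun y _ => by
      rw [sq_sqrt (by positivity)]
      linarith [Vpot_le y]
  have hupper : ∀ x ≥ x0, logDeriv φ₀ x ≤ -μ₀ :=
    logDeriv_le_neg_of_riccati (hC2.differentiable two_ne_zero) hpos hlim hh hμ₀
      fun x hx => by linarith [Vpot_nonneg_of_le hx0pos.le hx0 hx]
  have hW : Tendsto (fun x => Vpot x + μ₀ ^ 2) atTop (𝓝 (μ₀ ^ 2)) := by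
    simpa using tendsto_Vpot_atTop.add_const (μ₀ ^ 2)
  exact ⟨isGreatest_Vpot, fun x _ => hlower x, hupper,
    tendsto_neg_of_riccati hh hμ₀.le hW hlower (eventually_atTop.2 ⟨x0, hupper⟩)⟩

/-- `max_{(0,∞)} V = 8/27`, and bounds and limit at infinity for
`h₀ = φ₀'/φ₀`. -/
theorem h0_bounds_and_limit (φ₀ : ℝ → ℝ) (μ₀ : ℝ)
    (hC2 : ContDiff ℝ 2 φ₀) (hpos : ∀ x : ℝ, 0 < φ₀ x)
    (heven : ∀ x : ℝ, φ₀ (-x) = φ₀ x)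
    (hL2 : Integrable (fun x => (φ₀ x)^2))
    (hμ1 : (0.808:ℝ) ≤ μ₀) (hμ2 : μ₀ ≤ (0.883:ℝ))
    (heq : ∀ x : ℝ, -(deriv (deriv φ₀) x) + Vpot x * φ₀ x = -μ₀^2 * φ₀ x)
    (hdecay : ∃ C > (0:ℝ), ∀ x : ℝ,
      |φ₀ x| + |deriv φ₀ x| ≤ C * Real.exp (-(Real.sqrt 2 / 2) * μ₀ * |x|))
    (x0 : ℝ) (hx0pos : 0 < x0) (hx0 : Vpot x0 = 0)
    (hx0uniq : ∀ x ∈ Set.Ioi (0:ℝ), Vpot x = 0 → x = x0) :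
    IsGreatest (Vpot '' Set.Ioi (0:ℝ)) (8/27) ∧
    (∀ x : ℝ, 0 ≤ x → -Real.sqrt (μ₀^2 + 8/27) ≤ deriv φ₀ x / φ₀ x) ∧
    (∀ x : ℝ, x0 ≤ x → deriv φ₀ x / φ₀ x ≤ -μ₀) ∧
    Filter.Tendsto (fun x => deriv φ₀ x / φ₀ x) Filter.atTop (nhds (-μ₀)) :=
  h0_bounds_and_limit_general φ₀ μ₀ hC2 hpos hμ1 heq hdecay x0 hx0pos hx0
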